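/- Let f : [a,b] → ℝ be a convex function on [a,b]. Then 0 ≤ (1/8)·[ f′₊((a+b)/2) − f′₋((a+b)/2) ]·(b−a) ≤ (f(a) + f(b))/2 − (1/(b−a))·∫_a^b f(t) dt. -/

import Mathlib

/-!
Split `[a, b]` at its midpoint `m` and bound the integral over each half by the trapezoid
of the convex function there: `∫_a^b f ≤ (b - a)(f a + 2 f m + f b) / 4`. The one-sided
derivatives at `m` bound the secant slopes on either side, `(f m - f a)/(m - a) ≤ f′₋(m)` and
`f′₊(m) ≤ (f b - f m)/(b - m)`, so `f a + f b - 2 f m ≥ (f′₊(m) - f′₋(m))(b - a)/2`. Combining the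
two gives the bound; its nonnegativity is `f′₋(m) ≤ f′₊(m)`.
-/

open MeasureTheory Set intervalIntegral

theorem integral_chord {f : ℝ → ℝ} {a b : ℝ} (hab : a < b) :
    ∫ x in a..b, ((b - x) * f a + (x - a) * f b) / (b - a) = (b - a) * (f a + f b) / 2 := by
  have : b - a ≠ 0 := (sub_pos.2 hab).ne'
  rw [intervalIntegral.integral_div,
    intervalIntegral.integral_add ((intervalIntegrable_const.sub intervalIntegrable_id).mul_const _)
      ((intervalIntegrable_id.sub intervalIntegrable_const).mul_const _),
    intervalIntegral.integral_mul_const, intervalIntegral.integral_mul_const,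
    intervalIntegral.integral_sub intervalIntegrable_const intervalIntegrable_id,
    intervalIntegral.integral_sub intervalIntegrable_id intervalIntegrable_const, integral_id,
    intervalIntegral.integral_const, intervalIntegral.integral_const, smul_eq_mul, smul_eq_mul]
  field_simp
  ring

namespace ConvexOn

variable {S : Set ℝ} {f : ℝ → ℝ} {a b x l r : ℝ}

theorem le_chord (hf : ConvexOn ℝ (Icc a b) f) (hab : a < b) (hx : x ∈ Icc a b) :
    f x ≤ ((b - x) * f a + (x - a) * f b) / (b - a) := by
  have hba : b - a ≠ 0 := (sub_pos.2 hab).ne'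
  calc f x = f (((b - x) / (b - a)) • a + ((x - a) / (b - a)) • b) := by
        congr 1; simp only [smul_eq_mul]; field_simp; ring
    _ ≤ ((b - x) / (b - a)) • f a + ((x - a) / (b - a)) • f b :=
        hf.2 (left_mem_Icc.2 hab.le) (right_mem_Icc.2 hab.le)
          (div_nonneg (sub_nonneg.2 hx.2) (sub_pos.2 hab).le)
          (div_nonneg (sub_nonneg.2 hx.1) (sub_pos.2 hab).le) (by field_simp; ring)
    _ = ((b - x) * f a + (x - a) * f b) / (b - a) := by
        simp only [smul_eq_mul]; field_simp

-- The lower bound comes from reflecting `x` to `a + b - x`: the midpoint of the two is `(a + b)/2`.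
theorem abs_le_of_mem_Icc (hf : ConvexOn ℝ (Icc a b) f) (hx : x ∈ Icc a b) :
    |f x| ≤ 2 * |f ((a + b) / 2)| + |max (f a) (f b)| := by
  have hab : a ≤ b := hx.1.trans hx.2
  have hx' : a + b - x ∈ Icc a b := ⟨by linarith [hx.2], by linarith [hx.1]⟩
  have upper : ∀ y ∈ Icc a b, f y ≤ max (f a) (f b) := fun y hy =>
    hf.le_on_segment (left_mem_Icc.2 hab) (right_mem_Icc.2 hab) (by rwa [segment_eq_Icc hab])
  have mid : f ((a + b) / 2) ≤ (f x + f (a + b - x)) / 2 :=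
    calc f ((a + b) / 2) = f ((1 / 2 : ℝ) • x + (1 / 2 : ℝ) • (a + b - x)) := by
          congr 1; simp only [smul_eq_mul]; ring
      _ ≤ (1 / 2 : ℝ) • f x + (1 / 2 : ℝ) • f (a + b - x) :=
          hf.2 hx hx' (by norm_num) (by norm_num) (by norm_num)
      _ = (f x + f (a + b - x)) / 2 := by simp only [smul_eq_mul]; ring
  have := upper x hx
  have := upper _ hx'
  rw [abs_le]
  constructor <;>
    linarith [neg_abs_le (f ((a + b) / 2)), abs_nonneg (f ((a + b) / 2)),
      le_abs_self (max (f a) (f b)), neg_abs_le (max (f a) (f b))]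

theorem intervalIntegrable (hf : ConvexOn ℝ (Icc a b) f) (hab : a ≤ b) :
    IntervalIntegrable f volume a b := by
  have hcont : ContinuousOn f (Ioo a b) := by
    simpa only [interior_Icc] using hf.continuousOn_interior
  have hIoo : IntegrableOn f (Ioo a b) volume :=
    .of_bound measure_Ioo_lt_top (hcont.aestronglyMeasurable measurableSet_Ioo) _
      ((ae_restrict_mem measurableSet_Ioo).mono fun x hx =>
        hf.abs_le_of_mem_Icc (Ioo_subset_Icc_self hx))
  rw [intervalIntegrable_iff, uIoc_of_le hab]
  exact hIoo.congr_set_ae Ioo_ae_eq_Ioc.symm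

theorem integral_le_trapezoid (hf : ConvexOn ℝ (Icc a b) f) (hab : a ≤ b) :
    ∫ x in a..b, f x ≤ (b - a) * (f a + f b) / 2 := by
  rcases hab.eq_or_lt with rfl | hab
  · simp
  calc ∫ x in a..b, f x ≤ ∫ x in a..b, ((b - x) * f a + (x - a) * f b) / (b - a) :=
        integral_mono_on hab.le (hf.intervalIntegrable hab.le)
          ((by fun_prop : Continuous _).intervalIntegrable _ _) fun x hx => hf.le_chord hab hx
    _ = (b - a) * (f a + f b) / 2 := integral_chord hab

theorem integral_le_midpoint_trapezoid (hf : ConvexOn ℝ (Icc a b) f) (hab : a ≤ b) :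
    ∫ x in a..b, f x ≤ (b - a) * (f a + 2 * f ((a + b) / 2) + f b) / 4 := by
  have ham : a ≤ (a + b) / 2 := by linarith
  have hmb : (a + b) / 2 ≤ b := by linarith
  have hl := hf.subset (Icc_subset_Icc_right hmb) (convex_Icc _ _)
  have hr := hf.subset (Icc_subset_Icc_left ham) (convex_Icc _ _)
  rw [← integral_add_adjacent_intervals (hl.intervalIntegrable ham) (hr.intervalIntegrable hmb)]
  linarith [hl.integral_le_trapezoid ham, hr.integral_le_trapezoid hmb]

theorem leftDeriv_le_rightDeriv_of_hasDerivWithinAt (hf : ConvexOn ℝ S f) (hx : x ∈ interior S)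
    (hl : HasDerivWithinAt f l (Iio x) x) (hr : HasDerivWithinAt f r (Ioi x) x) : l ≤ r := by
  rw [← hl.derivWithin (uniqueDiffWithinAt_Iio x), ← hr.derivWithin (uniqueDiffWithinAt_Ioi x)]
  exact hf.leftDeriv_le_rightDeriv_of_mem_interior hx

theorem sub_mul_le_of_hasDerivWithinAt_Iio_Ioi (hf : ConvexOn ℝ S f) (ha : a ∈ S) (hb : b ∈ S)
    (hab : a < b) (hl : HasDerivWithinAt f l (Iio ((a + b) / 2)) ((a + b) / 2))
    (hr : HasDerivWithinAt f r (Ioi ((a + b) / 2)) ((a + b) / 2)) :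
    (r - l) * (b - a) ≤ 2 * (f a + f b - 2 * f ((a + b) / 2)) := by
  have hm : (a + b) / 2 ∈ S := hf.1.ordConnected.out ha hb ⟨by linarith, by linarith⟩
  have hleft := hf.slope_le_of_hasDerivWithinAt_Iio ha hm (by linarith) hl
  have hright := hf.le_slope_of_hasDerivWithinAt_Ioi hm hb (by linarith) hr
  rw [slope_def_field, div_le_iff₀ (by linarith)] at hleft
  rw [slope_def_field, le_div_iff₀ (by linarith)] at hright
  linarith

end ConvexOn

theorem hermite_hadamard_difference_lower_bound
    (a b : ℝ) (hab : a < b) (f : ℝ → ℝ)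
    (hf : ConvexOn ℝ (Set.Icc a b) f) (fdp fdm : ℝ)
    (hfdp : HasDerivWithinAt f fdp (Set.Ici ((a + b) / 2)) ((a + b) / 2))
    (hfdm : HasDerivWithinAt f fdm (Set.Iic ((a + b) / 2)) ((a + b) / 2)) :
    0 ≤ (1 / 8) * (fdp - fdm) * (b - a) ∧
      (1 / 8) * (fdp - fdm) * (b - a) ≤
        (f a + f b) / 2 - (1 / (b - a)) * ∫ t in a..b, f t := by
  have hba : 0 < b - a := sub_pos.2 hab
  have hmid : (a + b) / 2 ∈ interior (Icc a b) := by
    rw [interior_Icc]; constructor <;> linarith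
  have hjump_nonneg : fdm ≤ fdp :=
    hf.leftDeriv_le_rightDeriv_of_hasDerivWithinAt hmid hfdm.Iio_of_Iic hfdp.Ioi_of_Ici
  have hjump := hf.sub_mul_le_of_hasDerivWithinAt_Iio_Ioi (left_mem_Icc.2 hab.le)
    (right_mem_Icc.2 hab.le) hab hfdm.Iio_of_Iic hfdp.Ioi_of_Ici
  have htrap := hf.integral_le_midpoint_trapezoid hab.le
  refine ⟨by have := sub_nonneg.2 hjump_nonneg; positivity, ?_⟩
  rw [← sub_nonneg]
  field_simp
  linarith [mul_le_mul_of_nonneg_right hjump hba.le]
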